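/- arXiv:2201.11610 — 2 statements merged into one kernel-verified Lean document; each statement's English description precedes it below -/
import Mathlib

section
/- Let Σ be a bi-infinite Mallows permutation of ℤ with parameter 0 < q < 1. Then for every j ∈ ℤ, q · P(Σ(0) = j) ≤ P(Σ(0) = j+1) ≤ (1/q) · P(Σ(0) = j). -/
/-!
With `w r l = q^(rl+r+l) / ((q;q)_r (q;q)_l)`, the mass `P(Σ(0) = d)` is a constant multiple of
the diagonal sum `S_d = ∑_{r-l=d} w r l`, and `S_{-d} = S_d` because `w` is symmetric.
The ratio `(1 - q^(r+1)) w (r+1) l = q^(l+1) w r l` and its mirror image combine into the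
three-term identity `q w (r+1) l = q² q^l w r l + (1 - q^(l+1)) w (r+1) (l+1)`. Summed along the
diagonal it gives `q S_{n+1} = q² W_n + (S_n - W_n)` with `W_n = ∑_l q^l w (l+n) l ∈ [0, S_n]`,
so `q S_{n+1}` lies between `q² S_n` and `S_n`. Summability comes from the uniform bound
`1 / (q;q)_n ≤ exp ((1-q)⁻²)`.
-/

/-- The `q`-Pochhammer symbol `(q;q)_n = Π_{i=1}^n (1 - q^i)`. -/
def qPoch (q : ℝ) (n : ℕ) : ℝ := ∏ i ∈ Finset.range n, (1 - q ^ (i + 1))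

/-- The infinite `q`-Pochhammer symbol `(q;q)_∞ = Π_{i=1}^∞ (1 - q^i)`. -/
noncomputable def qPochInf (q : ℝ) : ℝ := ∏' i : ℕ, (1 - q ^ (i + 1))

/-- The one-point marginal of Gnedin–Olshanski's bi-infinite Mallows permutation
`Σ ∼ Mallows(ℤ, q)`:
`P(Σ(0) = d) = (1-q)(q;q)_∞ Σ_{r,l ≥ 0, r-l = d} q^{rl+r+l}/((q;q)_r (q;q)_l)`. -/
noncomputable def mallowsZMass (q : ℝ) (d : ℤ) : ℝ :=
  (1 - q) * qPochInf q *
    ∑' p : ℕ × ℕ,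
      if (p.1 : ℤ) - (p.2 : ℤ) = d then
        q ^ (p.1 * p.2 + p.1 + p.2) / (qPoch q p.1 * qPoch q p.2)
      else 0

open Finset

noncomputable def mallowsWeight (q : ℝ) (r l : ℕ) : ℝ :=
  q ^ (r * l + r + l) / (qPoch q r * qPoch q l)

lemma qPoch_succ (q : ℝ) (n : ℕ) : qPoch q (n + 1) = qPoch q n * (1 - q ^ (n + 1)) :=
  prod_range_succ _ _

lemma mallowsWeight_comm (q : ℝ) (r l : ℕ) : mallowsWeight q r l = mallowsWeight q l r := by
  rw [mallowsWeight, mallowsWeight, mul_comm (qPoch q l)]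
  ring

lemma mallowsZMass_eq_tsum_mallowsWeight (q : ℝ) (d : ℤ) :
    mallowsZMass q d = (1 - q) * qPochInf q *
      ∑' p : ℕ × ℕ, if (p.1 : ℤ) - p.2 = d then mallowsWeight q p.1 p.2 else 0 :=
  rfl

lemma mallowsZMass_neg (q : ℝ) (d : ℤ) : mallowsZMass q (-d) = mallowsZMass q d := by
  rw [mallowsZMass_eq_tsum_mallowsWeight, mallowsZMass_eq_tsum_mallowsWeight,
    ← (Equiv.prodComm ℕ ℕ).tsum_eq]
  congr 2 with p
  simp only [Equiv.prodComm_apply, Prod.fst_swap, Prod.snd_swap, mallowsWeight_comm q p.2]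
  congr 1
  exact propext (by omega)

noncomputable def mallowsDiagSum (q : ℝ) (n : ℕ) : ℝ := ∑' l, mallowsWeight q (l + n) l

lemma mallowsZMass_natCast (q : ℝ) (n : ℕ) :
    mallowsZMass q n = (1 - q) * qPochInf q * mallowsDiagSum q n := by
  rw [mallowsZMass_eq_tsum_mallowsWeight, mallowsDiagSum]
  congr 1
  have hinj : Function.Injective fun l : ℕ => (l + n, l) := fun a b h => (Prod.mk.inj h).2
  rw [← hinj.tsum_eq]
  · simp
  · rintro ⟨r, l⟩ hp
    have h : (r : ℤ) - l = n := by_contra fun h => hp (if_neg h)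
    exact ⟨l, Prod.ext (by simp only; omega) rfl⟩

section

variable {q : ℝ}

lemma one_sub_pow_mul_mallowsWeight_succ_left {r : ℕ} (h : q ^ (r + 1) ≠ 1) (l : ℕ) :
    (1 - q ^ (r + 1)) * mallowsWeight q (r + 1) l = q ^ (l + 1) * mallowsWeight q r l := by
  have hne : 1 - q ^ (r + 1) ≠ 0 := sub_ne_zero.2 h.symm
  rw [mallowsWeight, mallowsWeight, qPoch_succ, mul_right_comm, mul_comm _ (1 - q ^ (r + 1)),
    mul_div_assoc', mul_div_mul_left _ _ hne, mul_div_assoc', ← pow_add]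
  ring_nf

lemma one_sub_pow_mul_mallowsWeight_succ_right (r : ℕ) {l : ℕ} (h : q ^ (l + 1) ≠ 1) :
    (1 - q ^ (l + 1)) * mallowsWeight q r (l + 1) = q ^ (r + 1) * mallowsWeight q r l := by
  rw [mallowsWeight_comm q r, mallowsWeight_comm q r, one_sub_pow_mul_mallowsWeight_succ_left h]

lemma mallowsWeight_three_term {r l : ℕ} (hr : q ^ (r + 1) ≠ 1) (hl : q ^ (l + 1) ≠ 1) :
    q * mallowsWeight q (r + 1) l =
      q ^ 2 * (q ^ l * mallowsWeight q r l) +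
        (1 - q ^ (l + 1)) * mallowsWeight q (r + 1) (l + 1) := by
  rw [one_sub_pow_mul_mallowsWeight_succ_right (r + 1) hl]
  linear_combination q * one_sub_pow_mul_mallowsWeight_succ_left hr l

lemma pow_succ_lt_one (hq0 : 0 ≤ q) (hq1 : q < 1) (n : ℕ) : q ^ (n + 1) < 1 :=
  pow_lt_one₀ hq0 hq1 n.succ_ne_zero

lemma qPoch_pos (hq0 : 0 ≤ q) (hq1 : q < 1) (n : ℕ) : 0 < qPoch q n :=
  prod_pos fun i _ => sub_pos.2 (pow_succ_lt_one hq0 hq1 i)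

lemma inv_qPoch_le_exp (hq0 : 0 ≤ q) (hq1 : q < 1) (n : ℕ) :
    (qPoch q n)⁻¹ ≤ Real.exp ((1 - q)⁻¹ ^ 2) := by
  have hq : 0 < 1 - q := sub_pos.2 hq1
  have factor_le (i : ℕ) : (1 - q ^ (i + 1))⁻¹ ≤ 1 + q ^ i / (1 - q) := by
    have hy0 : 0 ≤ q ^ i := pow_nonneg hq0 i
    have hy1 : q ^ i ≤ 1 := pow_le_one₀ hq0 hq1.le
    rw [inv_le_iff_one_le_mul₀ (sub_pos.2 (pow_succ_lt_one hq0 hq1 i)), pow_succ',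
      one_add_div hq.ne', div_mul_eq_mul_div, le_div_iff₀ hq]
    nlinarith [mul_nonneg hy0 (sub_nonneg.2 hy1), mul_nonneg hy0 (sq_nonneg (1 - q)),
      mul_nonneg (mul_nonneg hy0 hq0) (sub_nonneg.2 hy1)]
  calc (qPoch q n)⁻¹ = ∏ i ∈ range n, (1 - q ^ (i + 1))⁻¹ := by
        rw [qPoch, prod_inv_distrib]
    _ ≤ ∏ i ∈ range n, (1 + q ^ i / (1 - q)) :=
        prod_le_prod (fun i _ => inv_nonneg.2 (sub_pos.2 (pow_succ_lt_one hq0 hq1 i)).le)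
          fun i _ => factor_le i
    _ ≤ Real.exp (∑ i ∈ range n, q ^ i / (1 - q)) :=
        Real.prod_one_add_le_exp_sum _ fun i => by positivity
    _ ≤ Real.exp ((1 - q)⁻¹ ^ 2) := by
        gcongr
        rw [← sum_div, range_eq_Ico, div_eq_mul_inv, sq]
        gcongr
        simpa using geom_sum_Ico_le_of_lt_one (m := 0) (n := n) hq0 hq1

lemma mallowsWeight_nonneg (hq0 : 0 ≤ q) (hq1 : q < 1) (r l : ℕ) : 0 ≤ mallowsWeight q r l :=
  div_nonneg (pow_nonneg hq0 _) (mul_pos (qPoch_pos hq0 hq1 r) (qPoch_pos hq0 hq1 l)).le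

lemma mallowsWeight_le (hq0 : 0 ≤ q) (hq1 : q < 1) (r l : ℕ) :
    mallowsWeight q r l ≤ Real.exp ((1 - q)⁻¹ ^ 2) ^ 2 * q ^ l := by
  have hpow : q ^ (r * l + r + l) ≤ q ^ l := pow_le_pow_of_le_one hq0 hq1.le (by omega)
  rw [mallowsWeight, div_eq_mul_inv, mul_inv, sq, mul_comm _ (q ^ l)]
  have hinv (k : ℕ) : 0 ≤ (qPoch q k)⁻¹ := inv_nonneg.2 (qPoch_pos hq0 hq1 k).le
  exact mul_le_mul hpow (mul_le_mul (inv_qPoch_le_exp hq0 hq1 r) (inv_qPoch_le_exp hq0 hq1 l)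
    (hinv l) (Real.exp_pos _).le) (mul_nonneg (hinv r) (hinv l)) (pow_nonneg hq0 l)

lemma summable_mallowsWeight_diag (hq0 : 0 ≤ q) (hq1 : q < 1) (n : ℕ) :
    Summable fun l => mallowsWeight q (l + n) l :=
  .of_nonneg_of_le (fun l => mallowsWeight_nonneg hq0 hq1 _ l)
    (fun l => mallowsWeight_le hq0 hq1 _ l)
    ((summable_geometric_of_lt_one hq0 hq1).mul_left _)

lemma summable_pow_mul_mallowsWeight_diag (hq0 : 0 ≤ q) (hq1 : q < 1) (n : ℕ) :
    Summable fun l => q ^ l * mallowsWeight q (l + n) l :=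
  .of_nonneg_of_le (fun l => mul_nonneg (pow_nonneg hq0 l) (mallowsWeight_nonneg hq0 hq1 _ l))
    (fun l => mul_le_of_le_one_left (mallowsWeight_nonneg hq0 hq1 _ l) (pow_le_one₀ hq0 hq1.le))
    (summable_mallowsWeight_diag hq0 hq1 n)

lemma mul_mallowsDiagSum_succ (hq0 : 0 ≤ q) (hq1 : q < 1) (n : ℕ) :
    q * mallowsDiagSum q (n + 1) =
      q ^ 2 * ∑' l, q ^ l * mallowsWeight q (l + n) l +
        (mallowsDiagSum q n - ∑' l, q ^ l * mallowsWeight q (l + n) l) := by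
  set w := fun l => mallowsWeight q (l + n) l
  have hS : Summable w := summable_mallowsWeight_diag hq0 hq1 n
  have hW : Summable fun l => q ^ l * w l := summable_pow_mul_mallowsWeight_diag hq0 hq1 n
  have hU : Summable fun l => (1 - q ^ l) * w l := (hS.sub hW).congr fun l => by ring
  have hne (k : ℕ) : q ^ (k + 1) ≠ 1 := (pow_succ_lt_one hq0 hq1 k).ne
  have hshift :
      ∑' l, (1 - q ^ (l + 1)) * w (l + 1) = mallowsDiagSum q n - ∑' l, q ^ l * w l := by
    rw [mallowsDiagSum, ← hS.tsum_sub hW, ← tsum_congr fun l => one_sub_mul (q ^ l) (w l),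
      hU.tsum_eq_zero_add]
    simp only [pow_zero, sub_self, zero_mul, zero_add]
  calc q * mallowsDiagSum q (n + 1) = ∑' l, q * mallowsWeight q (l + n + 1) l :=
        tsum_mul_left.symm
    _ = ∑' l, (q ^ 2 * (q ^ l * w l) + (1 - q ^ (l + 1)) * w (l + 1)) := by
        refine tsum_congr fun l => ?_
        rw [mallowsWeight_three_term (hne _) (hne _), Nat.add_right_comm l n 1]
    _ = _ := by
        rw [(hW.mul_left _).tsum_add ((summable_nat_add_iff 1).2 hU), tsum_mul_left, hshift]

lemma mallowsDiagSum_succ_bounds (hq0 : 0 < q) (hq1 : q < 1) (n : ℕ) :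
    q * mallowsDiagSum q n ≤ mallowsDiagSum q (n + 1) ∧
      q * mallowsDiagSum q (n + 1) ≤ mallowsDiagSum q n := by
  have hid := mul_mallowsDiagSum_succ hq0.le hq1 n
  set W := ∑' l, q ^ l * mallowsWeight q (l + n) l
  have hW0 : 0 ≤ W := tsum_nonneg fun l =>
    mul_nonneg (pow_nonneg hq0.le l) (mallowsWeight_nonneg hq0.le hq1 _ l)
  have hWS : W ≤ mallowsDiagSum q n :=
    (summable_pow_mul_mallowsWeight_diag hq0.le hq1 n).tsum_le_tsum
      (fun l => mul_le_of_le_one_left (mallowsWeight_nonneg hq0.le hq1 _ l)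
        (pow_le_one₀ hq0.le hq1.le))
      (summable_mallowsWeight_diag hq0.le hq1 n)
  have hq2 : q ^ 2 ≤ 1 := pow_le_one₀ hq0.le hq1.le
  constructor
  · refine le_of_mul_le_mul_left ?_ hq0
    nlinarith [mul_nonneg (sub_nonneg.2 hq2) (sub_nonneg.2 hWS)]
  · nlinarith [mul_nonneg (sub_nonneg.2 hq2) hW0]

lemma mallowsZMass_succ_bounds (hq0 : 0 < q) (hq1 : q < 1) (j : ℤ) :
    q * mallowsZMass q j ≤ mallowsZMass q (j + 1) ∧
      q * mallowsZMass q (j + 1) ≤ mallowsZMass q j := by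
  have hC : 0 ≤ (1 - q) * qPochInf q :=
    mul_nonneg (sub_nonneg.2 hq1.le)
      (tprod_nonneg fun i => sub_nonneg.2 (pow_succ_lt_one hq0.le hq1 i).le)
  have hnat (n : ℕ) : q * mallowsZMass q n ≤ mallowsZMass q (n + 1) ∧
      q * mallowsZMass q (n + 1) ≤ mallowsZMass q n := by
    obtain ⟨h₁, h₂⟩ := mallowsDiagSum_succ_bounds hq0 hq1 n
    simp only [← Nat.cast_succ, mallowsZMass_natCast, mul_left_comm q]
    exact ⟨mul_le_mul_of_nonneg_left h₁ hC, mul_le_mul_of_nonneg_left h₂ hC⟩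
  rcases j with n | n
  · exact hnat n
  · rw [Int.negSucc_eq, show -((n : ℤ) + 1) + 1 = -n by ring, mallowsZMass_neg, mallowsZMass_neg]
    exact (hnat n).symm

end

/-- For `Σ ∼ Mallows(ℤ, q)` with `0 < q < 1`, the one-point marginal satisfies
`q · P(Σ(0) = j) ≤ P(Σ(0) = j+1) ≤ (1/q) · P(Σ(0) = j)` for every `j ∈ ℤ`. -/
theorem mallowsZ_neighbor_ratio (q : ℝ) (hq0 : 0 < q) (hq1 : q < 1) (j : ℤ) :
    q * mallowsZMass q j ≤ mallowsZMass q (j + 1) ∧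
    mallowsZMass q (j + 1) ≤ (1 / q) * mallowsZMass q j := by
  obtain ⟨hlower, hupper⟩ := mallowsZMass_succ_bounds hq0 hq1 j
  exact ⟨hlower, by rwa [one_div, le_inv_mul_iff₀ hq0]⟩
end

section
/- Let Σ ∼ Mallows(ℤ, 1/q) with q > 1, and let r(i) = −i. Then the expected number of fixed points of r ∘ Σ equals P(Σ(0) is even), i.e., Σ_{i∈ℤ} P(Σ(i) = −i) = P(Σ(0) even). -/
open MeasureTheory

theorem measure_even_eq_tsum {Ω : Type*} [MeasurableSpace Ω] (μ : Measure Ω) (X : Ω → ℤ)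
    (hX : ∀ j : ℤ, MeasurableSet {ω | X ω = j}) :
    μ {ω | Even (X ω)} = ∑' i : ℤ, μ {ω | X ω = 2 * i} := by
  have hunion : {ω | Even (X ω)} = ⋃ i : ℤ, {ω | X ω = 2 * i} := by
    ext ω
    simp only [Set.mem_ofPred_eq, Set.mem_iUnion, even_iff_two_dvd, dvd_def]
  rw [hunion, measure_iUnion _ fun i => hX (2 * i)]
  intro i j hij
  simp only [Function.onFun, Set.disjoint_left, Set.mem_ofPred_eq]
  omega

theorem expected_fixed_points_r_comp_general
    {Ω : Type*} [MeasurableSpace Ω] (μ : Measure Ω)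
    (S : Ω → ℤ ≃ ℤ)
    (hmeas : ∀ i j : ℤ, MeasurableSet {ω | S ω i = j})
    (hshift : ∀ i j : ℤ, μ {ω | S ω i = j} = μ {ω | S ω 0 = j - i}) :
    ∑' i : ℤ, μ {ω | S ω i = -i} = μ {ω | Even (S ω 0)} := by
  have hterm : ∀ i : ℤ, μ {ω | S ω i = -i} = μ {ω | S ω 0 = 2 * -i} := fun i => by
    rw [hshift, show -i - i = 2 * -i by ring]
  simp_rw [hterm, measure_even_eq_tsum μ _ (hmeas 0)]
  exact (Equiv.neg ℤ).tsum_eq fun i => μ {ω | S ω 0 = 2 * i}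

/-- Let `Σ ∼ Mallows(ℤ, 1/q)` with `q > 1` and `r i = -i`.  Then the expected number of
fixed points of `r ∘ Σ` equals `P(Σ(0) even)`: `Σ_{i ∈ ℤ} P(Σ(i) = -i) = P(Σ(0) even)`.
The key property of the bi-infinite Mallows permutation used is shift invariance:
`Σ(i) - i` has the same distribution as `Σ(0)`. -/
theorem expected_fixed_points_r_comp
    {Ω : Type*} [MeasurableSpace Ω] (μ : Measure Ω) [IsProbabilityMeasure μ]
    (q : ℝ) (hq : 1 < q) (S : Ω → ℤ ≃ ℤ)
    (hmeas : ∀ i j : ℤ, MeasurableSet {ω | S ω i = j})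
    (hshift : ∀ i j : ℤ, μ {ω | S ω i = j} = μ {ω | S ω 0 = j - i}) :
    ∑' i : ℤ, μ {ω | S ω i = -i} = μ {ω | Even (S ω 0)} :=
  expected_fixed_points_r_comp_general μ S hmeas hshift
end
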